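/- The overlap between eigenvectors of v_{ra} and v_{rb} equals a normalized generalized quadratic Gauss sum: ⟨jα;ra | jβ;rb⟩ = (1/w)·S(u,v,w) with u = a-b, v = -(a-b)(2j+1) - 2(α-β), w = 2j+1. -/
import Mathlib


open Complex Finset

/-- The phase function `ρ(j,m,x,y,z) = (j+m)(j-m+1)x/2 - jmy + (j+m)z`. -/
noncomputable def rho (j m x y z : ℝ) : ℝ :=
  (j + m) * (j - m + 1) * x / 2 - j * m * y + (j + m) * z

/-- The vector `|jα;ra⟩` of components `(1/√d) q^{ρ(j, k-j, a, r, α)}`, `k = 0,…,d-1`,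
where `j = (d-1)/2` and `q^x = exp(2πix/d)`. -/
noncomputable def mubVec (d : ℕ) (a r α : ℝ) : Fin d → ℂ := fun k =>
  ((1 / Real.sqrt d : ℝ) : ℂ) *
    Complex.exp (2 * (Real.pi : ℂ) * Complex.I *
      ((rho (((d : ℝ) - 1) / 2) ((k : ℝ) - ((d : ℝ) - 1) / 2) a r α : ℝ) / (d : ℂ)))

/-- The overlap `⟨jα;ra | jβ;sb⟩` (standard Hermitian inner product on `ℂ^d`). -/
noncomputable def overlap (d : ℕ) (a r : ℝ) (α : ℝ) (b s : ℝ) (β : ℝ) : ℂ :=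
  ∑ k : Fin d, (starRingEnd ℂ) (mubVec d a r α k) * mubVec d b s β k

/-- Generalized quadratic Gauss sum `S(u,v,w) = ∑_{k=0}^{|w|-1} exp(iπ(uk² + vk)/w)`. -/
noncomputable def gaussS (u v w : ℤ) : ℂ :=
  ∑ k ∈ Finset.range w.natAbs,
    Complex.exp ((Real.pi : ℂ) * Complex.I *
      (((u : ℂ) * (k : ℂ) ^ 2 + (v : ℂ) * (k : ℂ)) / (w : ℂ)))

/-- `⟨jα;ra | jβ;rb⟩ = (1/w)·S(u,v,w)` with `u = a-b`,
`v = -(a-b)(2j+1) - 2(α-β)`, `w = 2j+1 = d`. -/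
theorem stmt_7 (d : ℕ) (hd : 2 ≤ d) (r : ℝ) (a b α β : ℕ)
    (ha : a < d) (hb : b < d) (hab : a ≠ b) (hα : α < d) (hβ : β < d) :
    overlap d a r α b r β =
      (1 / (d : ℂ)) *
        gaussS ((a : ℤ) - b) (-(((a : ℤ) - b)) * d - 2 * ((α : ℤ) - β)) d := by
  have hd0 : (0:ℝ) < (d : ℝ) := by positivity
  have hdC : (d : ℂ) ≠ 0 := Nat.cast_ne_zero.2 (by omega)
  have hs : ((1 / Real.sqrt d : ℝ) : ℂ) * ((1 / Real.sqrt d : ℝ) : ℂ) = 1 / (d : ℂ) := by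
    rw [← Complex.ofReal_mul, div_mul_div_comm, one_mul, Real.mul_self_sqrt hd0.le]
    push_cast; ring
  unfold overlap mubVec gaussS
  rw [Int.natAbs_natCast, Finset.sum_range, Finset.mul_sum]
  refine Finset.sum_congr rfl fun k hk => ?_
  simp only [map_mul, Complex.conj_ofReal, ← Complex.exp_conj, map_div₀, Complex.conj_I,
    map_ofNat, Complex.conj_natCast]
  rw [mul_mul_mul_comm, hs, ← Complex.exp_add]
  congr 2
  unfold rho
  push_cast
  field_simp
  ring
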